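/- arXiv:2005.08849 — 4 statements merged into one kernel-verified Lean document; each statement's English description precedes it below -/
import Mathlib

section
/- The Minkowski sum of two constrained polynomial zonotopes ⟨c₁,G₁,E₁,A₁,b₁,R₁⟩ and ⟨c₂,G₂,E₂,A₂,b₂,R₂⟩ (with p₁ and p₂ factors respectively) equals the constrained polynomial zonotope ⟨c₁+c₂, [G₁ G₂], blockdiag(E₁,E₂), blockdiag(A₁,A₂), [b₁;b₂], blockdiag(R₁,R₂)⟩ with p₁+p₂ factors. -/
open Finset Matrix Set

noncomputable section

/-- Monomial `∏ k, α k ^ e k`. -/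
def mono {p : Type*} [Fintype p] (α : p → ℝ) (e : p → ℕ) : ℝ := ∏ k, α k ^ e k

/-- All factors lie in `[-1,1]`. -/
def inBox {p : Type*} (α : p → ℝ) : Prop := ∀ k, α k ∈ Set.Icc (-1 : ℝ) 1

/-- Constrained polynomial zonotope. -/
def CPZ {n p h m q : Type*} [Fintype n] [Fintype p] [Fintype h] [Fintype m] [Fintype q]
    (c : n → ℝ) (G : Matrix n h ℝ) (E : Matrix p h ℕ)
    (A : Matrix m q ℝ) (b : m → ℝ) (R : Matrix p q ℕ) : Set (n → ℝ) :=
  {x | ∃ α : p → ℝ, inBox α ∧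
    (∑ i, mono α (fun k => R k i) • (fun j => A j i)) = b ∧
    x = c + ∑ i, mono α (fun k => E k i) • (fun j => G j i)}

/-!
A factor vector of the block-diagonal CPZ is a pair `(α₁, α₂)`, and block-diagonal exponent
matrices make each monomial depend on only one of `α₁`, `α₂`. Hence the block-diagonal constraint
splits into the two original constraints, and `[G₁ G₂]` applied to the monomial vector is the sum
of the two original generator parts.
-/

def monomials {p h : Type*} [Fintype p] (α : p → ℝ) (E : Matrix p h ℕ) : h → ℝ :=
  fun i => mono α (fun k => E k i)

theorem sum_mono_smul_col_eq_mulVec {n p h : Type*} [Fintype p] [Fintype h]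
    (α : p → ℝ) (E : Matrix p h ℕ) (G : Matrix n h ℝ) :
    ∑ i, mono α (fun k => E k i) • (fun j => G j i) = G *ᵥ monomials α E := by
  ext j
  simp [mulVec, dotProduct, monomials, mul_comm]

theorem mem_CPZ_iff {n p h m q : Type*} [Fintype n] [Fintype p] [Fintype h] [Fintype m]
    [Fintype q] {c : n → ℝ} {G : Matrix n h ℝ} {E : Matrix p h ℕ} {A : Matrix m q ℝ}
    {b : m → ℝ} {R : Matrix p q ℕ} {x : n → ℝ} :
    x ∈ CPZ c G E A b R ↔
      ∃ α, inBox α ∧ A *ᵥ monomials α R = b ∧ x = c + G *ᵥ monomials α E := by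
  simp only [CPZ, Set.mem_ofPred_eq, sum_mono_smul_col_eq_mulVec]

theorem exists_sumElim {ι κ γ : Type*} {P : (ι ⊕ κ → γ) → Prop} :
    (∃ f, P f) ↔ ∃ f₁ f₂, P (Sum.elim f₁ f₂) :=
  ⟨fun ⟨f, hf⟩ => ⟨f ∘ Sum.inl, f ∘ Sum.inr, by rwa [Sum.elim_comp_inl_inr]⟩,
    fun ⟨_, _, hf⟩ => ⟨_, hf⟩⟩

theorem inBox_sumElim {p₁ p₂ : Type*} {α₁ : p₁ → ℝ} {α₂ : p₂ → ℝ} :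
    inBox (Sum.elim α₁ α₂) ↔ inBox α₁ ∧ inBox α₂ := by
  simp [inBox]

theorem monomials_sumElim_fromBlocks {p₁ p₂ h₁ h₂ : Type*} [Fintype p₁] [Fintype p₂]
    (α₁ : p₁ → ℝ) (α₂ : p₂ → ℝ) (E₁ : Matrix p₁ h₁ ℕ) (E₂ : Matrix p₂ h₂ ℕ) :
    monomials (Sum.elim α₁ α₂) (fromBlocks E₁ 0 0 E₂) =
      Sum.elim (monomials α₁ E₁) (monomials α₂ E₂) := by
  ext (i | i) <;> simp [monomials, mono, Fintype.prod_sum_type]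

theorem mem_CPZ_fromBlocks_iff {n p₁ p₂ h₁ h₂ m₁ m₂ q₁ q₂ : Type*} [Fintype n]
    [Fintype p₁] [Fintype p₂] [Fintype h₁] [Fintype h₂] [Fintype m₁] [Fintype m₂]
    [Fintype q₁] [Fintype q₂]
    {c : n → ℝ} {G₁ : Matrix n h₁ ℝ} {E₁ : Matrix p₁ h₁ ℕ} {A₁ : Matrix m₁ q₁ ℝ} {b₁ : m₁ → ℝ}
    {R₁ : Matrix p₁ q₁ ℕ} {G₂ : Matrix n h₂ ℝ} {E₂ : Matrix p₂ h₂ ℕ} {A₂ : Matrix m₂ q₂ ℝ}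
    {b₂ : m₂ → ℝ} {R₂ : Matrix p₂ q₂ ℕ} {x : n → ℝ} :
    x ∈ CPZ c (fromCols G₁ G₂) (fromBlocks E₁ 0 0 E₂) (fromBlocks A₁ 0 0 A₂)
        (Sum.elim b₁ b₂) (fromBlocks R₁ 0 0 R₂) ↔
      ∃ α₁ α₂, inBox α₁ ∧ inBox α₂ ∧ A₁ *ᵥ monomials α₁ R₁ = b₁ ∧ A₂ *ᵥ monomials α₂ R₂ = b₂ ∧
        x = c + (G₁ *ᵥ monomials α₁ E₁ + G₂ *ᵥ monomials α₂ E₂) := by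
  rw [mem_CPZ_iff, exists_sumElim]
  simp only [inBox_sumElim, monomials_sumElim_fromBlocks, fromBlocks_mulVec,
    fromCols_mulVec_sumElim, Sum.elim_comp_inl, Sum.elim_comp_inr, zero_mulVec, add_zero,
    zero_add, Sum.elim_eq_iff, and_assoc]

/-- Minkowski sum of two CPZs. -/
theorem CPZ_minkowski_sum {n p₁ p₂ h₁ h₂ m₁ m₂ q₁ q₂ : ℕ}
    (c₁ : Fin n → ℝ) (G₁ : Matrix (Fin n) (Fin h₁) ℝ) (E₁ : Matrix (Fin p₁) (Fin h₁) ℕ)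
    (A₁ : Matrix (Fin m₁) (Fin q₁) ℝ) (b₁ : Fin m₁ → ℝ) (R₁ : Matrix (Fin p₁) (Fin q₁) ℕ)
    (c₂ : Fin n → ℝ) (G₂ : Matrix (Fin n) (Fin h₂) ℝ) (E₂ : Matrix (Fin p₂) (Fin h₂) ℕ)
    (A₂ : Matrix (Fin m₂) (Fin q₂) ℝ) (b₂ : Fin m₂ → ℝ) (R₂ : Matrix (Fin p₂) (Fin q₂) ℕ) :
    {x : Fin n → ℝ | ∃ s₁ ∈ CPZ c₁ G₁ E₁ A₁ b₁ R₁, ∃ s₂ ∈ CPZ c₂ G₂ E₂ A₂ b₂ R₂,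
      x = s₁ + s₂} =
    CPZ (c₁ + c₂) (Matrix.fromCols G₁ G₂) (Matrix.fromBlocks E₁ 0 0 E₂)
      (Matrix.fromBlocks A₁ 0 0 A₂) (Sum.elim b₁ b₂) (Matrix.fromBlocks R₁ 0 0 R₂) := by
  ext x
  rw [Set.mem_ofPred_eq, mem_CPZ_fromBlocks_iff]
  constructor
  · rintro ⟨_, hs₁, _, hs₂, rfl⟩
    obtain ⟨α₁, hα₁, hA₁, rfl⟩ := mem_CPZ_iff.1 hs₁
    obtain ⟨α₂, hα₂, hA₂, rfl⟩ := mem_CPZ_iff.1 hs₂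
    exact ⟨α₁, α₂, hα₁, hα₂, hA₁, hA₂, by abel⟩
  · rintro ⟨α₁, α₂, hα₁, hα₂, hA₁, hA₂, rfl⟩
    exact ⟨_, mem_CPZ_iff.2 ⟨α₁, hα₁, hA₁, rfl⟩, _, mem_CPZ_iff.2 ⟨α₂, hα₂, hA₂, rfl⟩, by abel⟩
end
end

section
/- The quadratic map of a CPZ is a CPZ: given CPZ = ⟨c,G,E,A,b,R⟩ ⊂ ℝⁿ and matrices Q₁,…,Q_w ∈ ℝ^{n×n}, the set sq(Q,CPZ) = { x ∈ ℝ^w : x_i = sᵀQ_i s, s ∈ CPZ } equals the CPZ with starting point c̄ where c̄_i = cᵀQ_i c, generator matrix [Ĝ₁ Ĝ₂ Ḡ₁ … Ḡ_h] where Ĝ₁ has rows cᵀQ_iG, Ĝ₂ has rows GᵀQ_i c (transposed appropriately), and Ḡ_j has rows G_{·,j}ᵀ Q_i G, exponent matrix [E E Ē₁ … Ē_h] with Ē_j = E + E_{·,j}·𝟙ᵀ (adding E_{·,j} to each column of E), and unchanged constraints A, b, R. -/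
open Finset Matrix Set

noncomputable section

variable {n w p h m q : ℕ}

/-- Generator matrix [Ĝ₁ Ĝ₂ Ḡ₁ … Ḡ_h] of the quadratic-map CPZ. -/
def sqG (Q : Fin w → Matrix (Fin n) (Fin n) ℝ) (c : Fin n → ℝ)
    (G : Matrix (Fin n) (Fin h) ℝ) :
    Matrix (Fin w) (Fin h ⊕ Fin h ⊕ Fin h × Fin h) ℝ :=
  fun i col => match col with
    | .inl l => c ⬝ᵥ (Q i *ᵥ fun r => G r l)
    | .inr (.inl j) => (fun r => G r j) ⬝ᵥ (Q i *ᵥ c)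
    | .inr (.inr (j, l)) => (fun r => G r j) ⬝ᵥ (Q i *ᵥ fun r => G r l)

/-- Exponent matrix [E E Ē₁ … Ē_h] of the quadratic-map CPZ, with
Ē_j obtained by adding the j-th column of E to every column of E. -/
def sqE (E : Matrix (Fin p) (Fin h) ℕ) :
    Matrix (Fin p) (Fin h ⊕ Fin h ⊕ Fin h × Fin h) ℕ :=
  fun k col => match col with
    | .inl l => E k l
    | .inr (.inl j) => E k j
    | .inr (.inr (j, l)) => E k j + E k l

lemma mono_add {p : Type*} [Fintype p] (α : p → ℝ) (e f : p → ℕ) :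
    mono α (fun k => e k + f k) = mono α e * mono α f := by
  simp only [mono, pow_add, Finset.prod_mul_distrib]

theorem dotProduct_mulVec_add_sum_smul {K n h : Type*} [CommRing K] [Fintype n] [Fintype h]
    (M : Matrix n n K) (c : n → K) (f : h → n → K) (a : h → K) :
    (c + ∑ l, a l • f l) ⬝ᵥ (M *ᵥ (c + ∑ l, a l • f l)) =
      c ⬝ᵥ (M *ᵥ c) + ∑ l, a l * (c ⬝ᵥ (M *ᵥ f l)) + ∑ j, a j * (f j ⬝ᵥ (M *ᵥ c)) +
        ∑ j, ∑ l, a j * a l * (f j ⬝ᵥ (M *ᵥ f l)) := by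
  simp only [mulVec_add, dotProduct_add, add_dotProduct, mulVec_sum, dotProduct_sum,
    sum_dotProduct, mulVec_smul, dotProduct_smul, smul_dotProduct, smul_eq_mul, mul_add,
    Finset.sum_add_distrib, Finset.mul_sum]
  have cross : ∑ l, ∑ j, a l * (a j * (f j ⬝ᵥ (M *ᵥ f l))) =
      ∑ j, ∑ l, a j * a l * (f j ⬝ᵥ (M *ᵥ f l)) :=
    Finset.sum_comm.trans (Finset.sum_congr rfl fun _ _ => Finset.sum_congr rfl fun _ _ => by ring)
  rw [cross]
  ring

/-- The three column blocks of `sqG` / `sqE` are the three sums of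
`dotProduct_mulVec_add_sum_smul`; in the cross terms `mono_add` merges `α^{E_j} α^{E_l}`. -/
theorem dotProduct_mulVec_eq_sqG_sqE (Q : Fin w → Matrix (Fin n) (Fin n) ℝ)
    (c : Fin n → ℝ) (G : Matrix (Fin n) (Fin h) ℝ) (E : Matrix (Fin p) (Fin h) ℕ)
    (α : Fin p → ℝ) (i : Fin w) :
    (c + ∑ l, mono α (fun k => E k l) • (fun r => G r l)) ⬝ᵥ
        (Q i *ᵥ (c + ∑ l, mono α (fun k => E k l) • (fun r => G r l))) =
      ((fun i => c ⬝ᵥ (Q i *ᵥ c)) +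
        ∑ col, mono α (fun k => sqE E k col) • (fun j => sqG Q c G j col)) i := by
  rw [dotProduct_mulVec_add_sum_smul]
  simp only [Pi.add_apply, Finset.sum_apply, Pi.smul_apply, smul_eq_mul,
    Fintype.sum_sum_type, Fintype.sum_prod_type, sqE, sqG, mono_add]
  ring_nf

/-- The quadratic map of a CPZ is a CPZ. -/
theorem CPZ_quadratic_map (Q : Fin w → Matrix (Fin n) (Fin n) ℝ)
    (c : Fin n → ℝ) (G : Matrix (Fin n) (Fin h) ℝ) (E : Matrix (Fin p) (Fin h) ℕ)
    (A : Matrix (Fin m) (Fin q) ℝ) (b : Fin m → ℝ) (R : Matrix (Fin p) (Fin q) ℕ) :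
    {x : Fin w → ℝ | ∃ s ∈ CPZ c G E A b R, ∀ i, x i = s ⬝ᵥ (Q i *ᵥ s)} =
    CPZ (fun i => c ⬝ᵥ (Q i *ᵥ c)) (sqG Q c G) (sqE E) A b R := by
  ext x
  constructor
  · rintro ⟨s, ⟨α, hα, hA, rfl⟩, hx⟩
    exact ⟨α, hα, hA, funext fun i => by rw [hx i, dotProduct_mulVec_eq_sqG_sqE]⟩
  · rintro ⟨α, hα, hA, rfl⟩
    exact ⟨_, ⟨α, hα, hA, rfl⟩, fun i => (dotProduct_mulVec_eq_sqG_sqE Q c G E α i).symm⟩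
end
end

section
/- The union of two constrained polynomial zonotopes is a constrained polynomial zonotope: for any two CPZs CPZ₁ and CPZ₂ with regular exponent and constraint exponent matrices (no zero columns), there exists a CPZ with p₁+p₂+2 factors whose set equals CPZ₁ ∪ CPZ₂, obtained by adding two switching factors α₁,α₂ with the constraint α₁α₂ = 1 and a polynomial constraint g(α) = (1 + α₁ + ½f₁(α)(1-α₁))(1 - ½f₂(α)) - α₂ - 1 = 0 where f₁(α) = (1/p₁)Σ_{i=3}^{p₁+2} α_i² and f₂(α) = (1/p₂)Σ_{i=p₁+3}^{p₁+p₂+2} α_i², together with the constraints Σ α^{R₁} A₁ = ½b₁ + ½b₁α₁ and Σ α^{R₂} A₂ = ½b₂ - ½b₂α₁, starting point ½(c₁+c₂), and generators [½(c₁-c₂) G₁ G₂] with exponent matrix placing α₁ on the first generator, E₁ on the G₁ block, and E₂ on the G₂ block. -/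
open Finset Matrix Set

noncomputable section

/-!
On the box, `a₁ * a₂ = 1` forces `a₁ = a₂ = ±1`. For `a₁ = 1` the polynomial constraint reads
`f₂ = 0`, and for `a₁ = -1` it reads `f₁ * (1 - f₂ / 2) = 0` with `f₂ ≤ 1`, so `f₁ = 0`. A vanishing
mean of squares kills all factors of that block, every monomial with a nonzero exponent then
vanishes, and the remaining constraints and generators are exactly those of `CPZ₁` resp. `CPZ₂`.
-/

lemma mono_zero {p : Type*} [Fintype p] {e : p → ℕ} (he : e ≠ 0) :
    mono (0 : p → ℝ) e = 0 := by
  obtain ⟨k, hk⟩ := Function.ne_iff.mp he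
  exact Finset.prod_eq_zero (Finset.mem_univ k) (by simpa using hk)

lemma sum_mono_zero_smul {p k n : Type*} [Fintype p] [Fintype k]
    {M : Matrix p k ℕ} (hM : ∀ i, (fun a => M a i) ≠ 0) (N : Matrix n k ℝ) :
    ∑ i, mono (0 : p → ℝ) (fun a => M a i) • (fun j => N j i) = 0 :=
  Finset.sum_eq_zero fun i _ => by rw [mono_zero (hM i), zero_smul]

lemma eq_zero_of_mean_sq_eq_zero {p : ℕ} {α : Fin p → ℝ}
    (h : (1 / (p : ℝ)) * ∑ i, α i ^ 2 = 0) : α = 0 := by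
  rcases mul_eq_zero.mp h with hp | hsum
  · obtain rfl : p = 0 := by simpa using hp
    exact Subsingleton.elim _ _
  · funext i
    simpa using (Finset.sum_eq_zero_iff_of_nonneg fun i _ => sq_nonneg (α i)).mp hsum i
      (Finset.mem_univ i)

lemma mean_sq_le_one {p : ℕ} {α : Fin p → ℝ} (hα : inBox α) :
    (1 / (p : ℝ)) * ∑ i, α i ^ 2 ≤ 1 := by
  have hsum : ∑ i, α i ^ 2 ≤ p := by
    simpa using Finset.sum_le_sum fun i (_ : i ∈ Finset.univ) =>
      (sq_le_one_iff_abs_le_one (α i)).mpr (abs_le.mpr (hα i))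
  rcases Nat.eq_zero_or_pos p with rfl | hp
  · simp
  · rw [one_div_mul_eq_div, div_le_one (by exact_mod_cast hp)]
    exact hsum

lemma eq_one_or_eq_neg_one_of_mul_eq_one {a b : ℝ} (ha : a ∈ Icc (-1 : ℝ) 1)
    (hb : b ∈ Icc (-1 : ℝ) 1) (hab : a * b = 1) : a = 1 ∨ a = -1 := by
  have habs : |a| = 1 := by
    have h : |a| * |b| = 1 := by rw [← abs_mul, hab, abs_one]
    nlinarith [abs_le.mpr ha, abs_le.mpr hb, abs_nonneg a, abs_nonneg b]
  exact abs_eq zero_le_one |>.mp habs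

lemma switching_constraint {a₁ a₂ f₁ f₂ : ℝ} (ha₁ : a₁ ∈ Icc (-1 : ℝ) 1)
    (ha₂ : a₂ ∈ Icc (-1 : ℝ) 1) (hmul : a₁ * a₂ = 1) (hf₂ : f₂ ≤ 1)
    (hg : (1 + a₁ + (1 / 2) * f₁ * (1 - a₁)) * (1 - (1 / 2) * f₂) - a₂ - 1 = 0) :
    (a₁ = 1 ∧ f₂ = 0) ∨ (a₁ = -1 ∧ f₁ = 0) := by
  rcases eq_one_or_eq_neg_one_of_mul_eq_one ha₁ ha₂ hmul with rfl | rfl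
  · obtain rfl : a₂ = 1 := by linarith
    exact Or.inl ⟨rfl, by linarith⟩
  · obtain rfl : a₂ = -1 := by linarith
    have h : f₁ * (1 - (1 / 2) * f₂) = 0 := by linear_combination hg
    exact Or.inr ⟨rfl, (mul_eq_zero.mp h).resolve_right (by linarith)⟩

theorem CPZ_union_general {n p₁ p₂ h₁ h₂ m₁ m₂ q₁ q₂ : ℕ}
    (c₁ : Fin n → ℝ) (G₁ : Matrix (Fin n) (Fin h₁) ℝ) (E₁ : Matrix (Fin p₁) (Fin h₁) ℕ)
    (A₁ : Matrix (Fin m₁) (Fin q₁) ℝ) (b₁ : Fin m₁ → ℝ) (R₁ : Matrix (Fin p₁) (Fin q₁) ℕ)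
    (c₂ : Fin n → ℝ) (G₂ : Matrix (Fin n) (Fin h₂) ℝ) (E₂ : Matrix (Fin p₂) (Fin h₂) ℕ)
    (A₂ : Matrix (Fin m₂) (Fin q₂) ℝ) (b₂ : Fin m₂ → ℝ) (R₂ : Matrix (Fin p₂) (Fin q₂) ℕ)
    (hE₁ : (∀ i, (fun k => E₁ k i) ≠ 0) ∧
      ∀ i j, i ≠ j → (fun k => E₁ k i) ≠ (fun k => E₁ k j))
    (hE₂ : (∀ i, (fun k => E₂ k i) ≠ 0) ∧
      ∀ i j, i ≠ j → (fun k => E₂ k i) ≠ (fun k => E₂ k j))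
    (hR₁ : (∀ i, (fun k => R₁ k i) ≠ 0) ∧
      ∀ i j, i ≠ j → (fun k => R₁ k i) ≠ (fun k => R₁ k j))
    (hR₂ : (∀ i, (fun k => R₂ k i) ≠ 0) ∧
      ∀ i j, i ≠ j → (fun k => R₂ k i) ≠ (fun k => R₂ k j)) :
    {x : Fin n → ℝ | ∃ a₁ a₂ : ℝ, ∃ α : Fin p₁ → ℝ, ∃ β : Fin p₂ → ℝ,
      a₁ ∈ Set.Icc (-1 : ℝ) 1 ∧ a₂ ∈ Set.Icc (-1 : ℝ) 1 ∧ inBox α ∧ inBox β ∧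
      a₁ * a₂ = 1 ∧
      (1 + a₁ + (1 / 2) * ((1 / (p₁ : ℝ)) * ∑ i, (α i) ^ 2) * (1 - a₁)) *
          (1 - (1 / 2) * ((1 / (p₂ : ℝ)) * ∑ j, (β j) ^ 2)) - a₂ - 1 = 0 ∧
      (∑ i, mono α (fun k => R₁ k i) • (fun j => A₁ j i)) =
        (1 / 2 : ℝ) • b₁ + ((1 / 2) * a₁) • b₁ ∧
      (∑ i, mono β (fun k => R₂ k i) • (fun j => A₂ j i)) =
        (1 / 2 : ℝ) • b₂ - ((1 / 2) * a₁) • b₂ ∧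
      x = (1 / 2 : ℝ) • (c₁ + c₂) + ((1 / 2) * a₁) • (c₁ - c₂)
            + ∑ i, mono α (fun k => E₁ k i) • (fun j => G₁ j i)
            + ∑ i, mono β (fun k => E₂ k i) • (fun j => G₂ j i)} =
    CPZ c₁ G₁ E₁ A₁ b₁ R₁ ∪ CPZ c₂ G₂ E₂ A₂ b₂ R₂ := by
  ext x
  simp only [Set.mem_ofPred_eq, Set.mem_union, CPZ]
  constructor
  · rintro ⟨a₁, a₂, α, β, ha₁, ha₂, hα, hβ, hmul, hg, hA₁, hA₂, hx⟩
    rcases switching_constraint ha₁ ha₂ hmul (mean_sq_le_one hβ) hg with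
      ⟨rfl, hβ0⟩ | ⟨rfl, hα0⟩
    · obtain rfl := eq_zero_of_mean_sq_eq_zero hβ0
      refine Or.inl ⟨α, hα, by rw [hA₁]; module, ?_⟩
      rw [hx, sum_mono_zero_smul hE₂.1]; module
    · obtain rfl := eq_zero_of_mean_sq_eq_zero hα0
      refine Or.inr ⟨β, hβ, by rw [hA₂]; module, ?_⟩
      rw [hx, sum_mono_zero_smul hE₁.1]; module
  · rintro (⟨α, hα, hA, hx⟩ | ⟨β, hβ, hA, hx⟩)
    · refine ⟨1, 1, α, 0, by norm_num, by norm_num, hα, fun _ => by norm_num, by norm_num,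
        by simp, by rw [hA]; module, by rw [sum_mono_zero_smul hR₂.1]; module, ?_⟩
      rw [hx, sum_mono_zero_smul hE₂.1]; module
    · refine ⟨-1, -1, 0, β, by norm_num, by norm_num, fun _ => by norm_num, hβ, by norm_num,
        by simp, by rw [sum_mono_zero_smul hR₁.1]; module, by rw [hA]; module, ?_⟩
      rw [hx, sum_mono_zero_smul hE₁.1]; module

/-- The union of two CPZs with regular exponent and constraint exponent matrices is again
a CPZ, obtained with two switching factors α₁, α₂ and the constraints of the paper's
union construction. -/
theorem CPZ_union {n p₁ p₂ h₁ h₂ m₁ m₂ q₁ q₂ : ℕ} (hp₁ : 1 ≤ p₁) (hp₂ : 1 ≤ p₂)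
    (c₁ : Fin n → ℝ) (G₁ : Matrix (Fin n) (Fin h₁) ℝ) (E₁ : Matrix (Fin p₁) (Fin h₁) ℕ)
    (A₁ : Matrix (Fin m₁) (Fin q₁) ℝ) (b₁ : Fin m₁ → ℝ) (R₁ : Matrix (Fin p₁) (Fin q₁) ℕ)
    (c₂ : Fin n → ℝ) (G₂ : Matrix (Fin n) (Fin h₂) ℝ) (E₂ : Matrix (Fin p₂) (Fin h₂) ℕ)
    (A₂ : Matrix (Fin m₂) (Fin q₂) ℝ) (b₂ : Fin m₂ → ℝ) (R₂ : Matrix (Fin p₂) (Fin q₂) ℕ)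
    (hE₁ : (∀ i, (fun k => E₁ k i) ≠ 0) ∧
      ∀ i j, i ≠ j → (fun k => E₁ k i) ≠ (fun k => E₁ k j))
    (hE₂ : (∀ i, (fun k => E₂ k i) ≠ 0) ∧
      ∀ i j, i ≠ j → (fun k => E₂ k i) ≠ (fun k => E₂ k j))
    (hR₁ : (∀ i, (fun k => R₁ k i) ≠ 0) ∧
      ∀ i j, i ≠ j → (fun k => R₁ k i) ≠ (fun k => R₁ k j))
    (hR₂ : (∀ i, (fun k => R₂ k i) ≠ 0) ∧
      ∀ i j, i ≠ j → (fun k => R₂ k i) ≠ (fun k => R₂ k j)) :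
    {x : Fin n → ℝ | ∃ a₁ a₂ : ℝ, ∃ α : Fin p₁ → ℝ, ∃ β : Fin p₂ → ℝ,
      a₁ ∈ Set.Icc (-1 : ℝ) 1 ∧ a₂ ∈ Set.Icc (-1 : ℝ) 1 ∧ inBox α ∧ inBox β ∧
      a₁ * a₂ = 1 ∧
      (1 + a₁ + (1 / 2) * ((1 / (p₁ : ℝ)) * ∑ i, (α i) ^ 2) * (1 - a₁)) *
          (1 - (1 / 2) * ((1 / (p₂ : ℝ)) * ∑ j, (β j) ^ 2)) - a₂ - 1 = 0 ∧
      (∑ i, mono α (fun k => R₁ k i) • (fun j => A₁ j i)) =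
        (1 / 2 : ℝ) • b₁ + ((1 / 2) * a₁) • b₁ ∧
      (∑ i, mono β (fun k => R₂ k i) • (fun j => A₂ j i)) =
        (1 / 2 : ℝ) • b₂ - ((1 / 2) * a₁) • b₂ ∧
      x = (1 / 2 : ℝ) • (c₁ + c₂) + ((1 / 2) * a₁) • (c₁ - c₂)
            + ∑ i, mono α (fun k => E₁ k i) • (fun j => G₁ j i)
            + ∑ i, mono β (fun k => E₂ k i) • (fun j => G₂ j i)} =
    CPZ c₁ G₁ E₁ A₁ b₁ R₁ ∪ CPZ c₂ G₂ E₂ A₂ b₂ R₂ :=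
  CPZ_union_general c₁ G₁ E₁ A₁ b₁ R₁ c₂ G₂ E₂ A₂ b₂ R₂ hE₁ hE₂ hR₁ hR₂
end
end

section
/- For the combined constraint system with factor domain restriction, the feasible factor set of the union construction is D = D₁ ∪ D₂ where D₁ = {1}×{1}×[-1,1]^{p₁}×{0}^{p₂} and D₂ = {-1}×{-1}×{0}^{p₁}×[-1,1]^{p₂}: i.e., { α ∈ [-1,1]^{p₁+p₂+2} : α₁α₂ = 1 and (1 + α₁ + ½f₁(α)(1-α₁))(1 - ½f₂(α)) - α₂ - 1 = 0 } = D₁ ∪ D₂, where f₁(α) = (1/p₁)Σ_{i=3}^{p₁+2} α_i² and f₂(α) = (1/p₂)Σ_{i=p₁+3}^{p₁+p₂+2} α_i². -/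
/-!
On `[-1,1]²`, `a * b = 1` forces `a = b = ±1`. At `a = b = 1` the constraint collapses to
`f₂ = 0`; at `a = b = -1` it collapses to `f₁ * (1 - f₂ / 2) = 0`, and the second factor is
positive because `f₂ ≤ 1` on the cube.
-/

open Finset

theorem eq_one_or_eq_neg_one_of_mul_eq_one_of_mem_Icc {a b : ℝ} (ha : a ∈ Set.Icc (-1 : ℝ) 1)
    (hb : b ∈ Set.Icc (-1 : ℝ) 1) (hab : a * b = 1) :
    (a = 1 ∧ b = 1) ∨ (a = -1 ∧ b = -1) := by
  obtain ⟨ha₀, ha₁⟩ := ha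
  obtain ⟨hb₀, hb₁⟩ := hb
  obtain rfl : b = a := by
    nlinarith [mul_nonneg (sub_nonneg.2 ha₁) (neg_le_iff_add_nonneg.1 hb₀),
      mul_nonneg (sub_nonneg.2 hb₁) (neg_le_iff_add_nonneg.1 ha₀)]
  rcases mul_self_eq_one_iff.1 hab with rfl | rfl <;> simp

theorem mean_sq_eq_zero_iff {n : ℕ} {f : Fin n → ℝ} :
    1 / (n : ℝ) * ∑ i, f i ^ 2 = 0 ↔ f = 0 := by
  rcases Nat.eq_zero_or_pos n with rfl | hn
  · simp [Subsingleton.elim f 0]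
  rw [mul_eq_zero, or_iff_right (by positivity),
    Fintype.sum_eq_zero_iff_of_nonneg fun i => sq_nonneg (f i)]
  simp [funext_iff]

theorem mean_sq_le_one_s19 {n : ℕ} {f : Fin n → ℝ} (hf : ∀ i, f i ∈ Set.Icc (-1 : ℝ) 1) :
    1 / (n : ℝ) * ∑ i, f i ^ 2 ≤ 1 := by
  rcases Nat.eq_zero_or_pos n with rfl | hn
  · simp
  have hsum : ∑ i, f i ^ 2 ≤ n := by
    simpa using sum_le_card_nsmul univ (fun i => f i ^ 2) 1 fun i _ =>
      sq_le_one_iff_abs_le_one (f i) |>.2 (abs_le.2 (hf i))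
  rwa [one_div_mul_eq_div, div_le_one (by positivity)]

theorem union_factor_domain_general {p₁ p₂ : ℕ} :
    {q : ℝ × ℝ × (Fin p₁ → ℝ) × (Fin p₂ → ℝ) |
        q.1 ∈ Set.Icc (-1 : ℝ) 1 ∧ q.2.1 ∈ Set.Icc (-1 : ℝ) 1 ∧
        (∀ i, q.2.2.1 i ∈ Set.Icc (-1 : ℝ) 1) ∧ (∀ j, q.2.2.2 j ∈ Set.Icc (-1 : ℝ) 1) ∧
        q.1 * q.2.1 = 1 ∧
        (1 + q.1 + (1 / 2) * ((1 / (p₁ : ℝ)) * ∑ i, (q.2.2.1 i) ^ 2) * (1 - q.1)) *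
            (1 - (1 / 2) * ((1 / (p₂ : ℝ)) * ∑ j, (q.2.2.2 j) ^ 2)) - q.2.1 - 1 = 0} =
    {q : ℝ × ℝ × (Fin p₁ → ℝ) × (Fin p₂ → ℝ) |
        q.1 = 1 ∧ q.2.1 = 1 ∧ (∀ i, q.2.2.1 i ∈ Set.Icc (-1 : ℝ) 1) ∧ q.2.2.2 = 0} ∪
    {q : ℝ × ℝ × (Fin p₁ → ℝ) × (Fin p₂ → ℝ) |
        q.1 = -1 ∧ q.2.1 = -1 ∧ q.2.2.1 = 0 ∧ (∀ j, q.2.2.2 j ∈ Set.Icc (-1 : ℝ) 1)} := by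
  ext ⟨a, b, x, y⟩
  simp only [Set.mem_ofPred_eq, Set.mem_union]
  set f₁ := 1 / (p₁ : ℝ) * ∑ i, x i ^ 2 with hf₁
  set f₂ := 1 / (p₂ : ℝ) * ∑ j, y j ^ 2 with hf₂
  constructor
  · rintro ⟨ha, hb, hx, hy, hab, hcon⟩
    rcases eq_one_or_eq_neg_one_of_mul_eq_one_of_mem_Icc ha hb hab with ⟨rfl, rfl⟩ | ⟨rfl, rfl⟩
    · have hf₂_zero : f₂ = 0 := by linear_combination -hcon
      exact Or.inl ⟨rfl, rfl, hx, mean_sq_eq_zero_iff.1 hf₂_zero⟩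
    · have hfactor_pos : 0 < 1 - 1 / 2 * f₂ := by linarith [mean_sq_le_one_s19 hy]
      have hf₁_zero : f₁ = 0 :=
        (mul_eq_zero.1 (by linear_combination hcon)).resolve_right hfactor_pos.ne'
      exact Or.inr ⟨rfl, rfl, mean_sq_eq_zero_iff.1 hf₁_zero, hy⟩
  · rintro (⟨rfl, rfl, hx, rfl⟩ | ⟨rfl, rfl, rfl, hy⟩)
    · exact ⟨by norm_num, by norm_num, hx, by simp, by norm_num, by simp [hf₂]⟩
    · exact ⟨by norm_num, by norm_num, by simp, hy, by norm_num, by simp [hf₁]⟩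

/-- Feasible factor set of the union construction: the two switching constraints restrict
the factor domain to D₁ ∪ D₂. -/
theorem union_factor_domain {p₁ p₂ : ℕ} (hp₁ : 1 ≤ p₁) (hp₂ : 1 ≤ p₂) :
    {q : ℝ × ℝ × (Fin p₁ → ℝ) × (Fin p₂ → ℝ) |
        q.1 ∈ Set.Icc (-1 : ℝ) 1 ∧ q.2.1 ∈ Set.Icc (-1 : ℝ) 1 ∧
        (∀ i, q.2.2.1 i ∈ Set.Icc (-1 : ℝ) 1) ∧ (∀ j, q.2.2.2 j ∈ Set.Icc (-1 : ℝ) 1) ∧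
        q.1 * q.2.1 = 1 ∧
        (1 + q.1 + (1 / 2) * ((1 / (p₁ : ℝ)) * ∑ i, (q.2.2.1 i) ^ 2) * (1 - q.1)) *
            (1 - (1 / 2) * ((1 / (p₂ : ℝ)) * ∑ j, (q.2.2.2 j) ^ 2)) - q.2.1 - 1 = 0} =
    {q : ℝ × ℝ × (Fin p₁ → ℝ) × (Fin p₂ → ℝ) |
        q.1 = 1 ∧ q.2.1 = 1 ∧ (∀ i, q.2.2.1 i ∈ Set.Icc (-1 : ℝ) 1) ∧ q.2.2.2 = 0} ∪
    {q : ℝ × ℝ × (Fin p₁ → ℝ) × (Fin p₂ → ℝ) |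
        q.1 = -1 ∧ q.2.1 = -1 ∧ q.2.2.1 = 0 ∧ (∀ j, q.2.2.2 j ∈ Set.Icc (-1 : ℝ) 1)} :=
  union_factor_domain_general
end
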